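/- Let n ≥ 1, let a_i := Z^{⊗i} ⊗ σ⁻ ⊗ I^{⊗(n−1−i)} be the n-qubit Jordan–Wigner annihilation operators, and let i < j < n and c ∈ ℂ. Then the hopping term satisfies c·(a_i)† a_j + conj(c)·(a_j)† a_i = ½ [ Re(c)·(X_{{i}}X_{{j}} + Y_{{i}}Y_{{j}}) + Im(c)·(Y_{{i}}X_{{j}} − X_{{i}}Y_{{j}}) ] · Z_{[i+1,j−1]}, where Z_{[i+1,j−1]} := Z_{Ico(i+1,j)} is the product of Pauli Z's on qubits i+1,…,j−1. Moreover each of the four Pauli strings X_{{i}}X_{{j}}Z_{Ico(i+1,j)}, Y_{{i}}Y_{{j}}Z_{Ico(i+1,j)}, Y_{{i}}X_{{j}}Z_{Ico(i+1,j)}, X_{{i}}Y_{{j}}Z_{Ico(i+1,j)} acts nontrivially on exactly j − i + 1 tensor factors. -/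

import Mathlib

open Matrix Finset
open scoped symmDiff

namespace FQ

/-- Pauli X. -/
noncomputable def X : Matrix (ZMod 2) (ZMod 2) ℂ := !![0, 1; 1, 0]

/-- Pauli Y. -/
noncomputable def Y : Matrix (ZMod 2) (ZMod 2) ℂ := !![0, -Complex.I; Complex.I, 0]

/-- Pauli Z. -/
noncomputable def Z : Matrix (ZMod 2) (ZMod 2) ℂ := !![1, 0; 0, -1]

/-- Tensor product `M 0 ⊗ M 1 ⊗ ⋯ ⊗ M (n-1)` of a family of single-qubit operators, as a
`2^n × 2^n` matrix indexed by functions `Fin n → ZMod 2`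
(the identification of `(ℂ²)^⊗n` with `ℂ^(2^n)`). -/
noncomputable def tens {n : ℕ} (M : Fin n → Matrix (ZMod 2) (ZMod 2) ℂ) :
    Matrix (Fin n → ZMod 2) (Fin n → ZMod 2) ℂ :=
  Matrix.of fun f g => ∏ i, M i (f i) (g i)

/-- The lowering operator `σ⁻ = (X + iY)/2`. -/
noncomputable def σm : Matrix (ZMod 2) (ZMod 2) ℂ := !![0, 1; 0, 0]

/-- The `n`-qubit Jordan–Wigner annihilation operators: `ann n i = Z^⊗i ⊗ σ⁻ ⊗ I^⊗(n-1-i)`. -/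
noncomputable def ann (n i : ℕ) : Matrix (Fin n → ZMod 2) (Fin n → ZMod 2) ℂ :=
  tens fun j => if (j : ℕ) < i then Z else if (j : ℕ) = i then σm else 1

/-- The Pauli string `X_S`: Pauli `X` on each tensor factor in `S`, identity elsewhere. -/
noncomputable def Xstr {n : ℕ} (S : Finset (Fin n)) :
    Matrix (Fin n → ZMod 2) (Fin n → ZMod 2) ℂ :=
  tens fun j => if j ∈ S then X else 1

/-- The Pauli string `Y_S`: Pauli `Y` on each tensor factor in `S`, identity elsewhere. -/
noncomputable def Ystr {n : ℕ} (S : Finset (Fin n)) :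
    Matrix (Fin n → ZMod 2) (Fin n → ZMod 2) ℂ :=
  tens fun j => if j ∈ S then Y else 1

/-- The Pauli string `Z_S`: Pauli `Z` on each tensor factor in `S`, identity elsewhere. -/
noncomputable def Zstr {n : ℕ} (S : Finset (Fin n)) :
    Matrix (Fin n → ZMod 2) (Fin n → ZMod 2) ℂ :=
  tens fun j => if j ∈ S then Z else 1

/-- The single-qubit factors of the Pauli string `A_{i} B_{j} Z_{[i+1,j-1]}` appearing in the
Jordan–Wigner image of a hopping term: `A` on factor `i`, `B` on factor `j`, `Z` strictly
between `i` and `j`, identity elsewhere. -/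
noncomputable def hopFam {n : ℕ} (i j : Fin n) (A B : Matrix (ZMod 2) (ZMod 2) ℂ) :
    Fin n → Matrix (ZMod 2) (ZMod 2) ℂ :=
  fun k => if k = i then A else if k = j then B else if i < k ∧ k < j then Z else 1

/-!
`tens` is multiplicative site by site and commutes with `ᴴ`. Hence, for `i < j`, `a_i† a_j` is
the product string with factors `Zᴴ Z = 1` below `i`, `σ⁻ᴴ Z = σ⁻ᴴ` at `i`, `Z` strictly between
`i` and `j`, `σ⁻` at `j` and `1` above `j`; similarly for `a_j† a_i`. All strings in the claim
then share their factors away from the sites `i` and `j`, so the identity reduces to the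
two-qubit identity
`c σ⁻ᴴ ⊗ σ⁻ + c̄ σ⁻ ⊗ σ⁻ᴴ = ½ [Re c (X ⊗ X + Y ⊗ Y) + Im c (Y ⊗ X - X ⊗ Y)]`,
a polynomial identity in the imaginary unit once `σ⁻ = (X + iY)/2` is substituted.
-/

lemma sum_zmod_two (f : ZMod 2 → ℂ) : ∑ x, f x = f 0 + f 1 := Fin.sum_univ_two f

lemma zmod_two_cases (a : ZMod 2) : a = 0 ∨ a = 1 := by revert a; decide

-- `simp` cannot evaluate `!![…]` at the numerals of `ZMod 2`, so the entries are given by `rfl`.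
@[simp] lemma X_apply_zero_zero : X 0 0 = 0 := rfl
@[simp] lemma X_apply_zero_one : X 0 1 = 1 := rfl
@[simp] lemma X_apply_one_zero : X 1 0 = 1 := rfl
@[simp] lemma X_apply_one_one : X 1 1 = 0 := rfl
@[simp] lemma Y_apply_zero_zero : Y 0 0 = 0 := rfl
@[simp] lemma Y_apply_zero_one : Y 0 1 = -Complex.I := rfl
@[simp] lemma Y_apply_one_zero : Y 1 0 = Complex.I := rfl
@[simp] lemma Y_apply_one_one : Y 1 1 = 0 := rfl
@[simp] lemma Z_apply_zero_zero : Z 0 0 = 1 := rfl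
@[simp] lemma Z_apply_zero_one : Z 0 1 = 0 := rfl
@[simp] lemma Z_apply_one_zero : Z 1 0 = 0 := rfl
@[simp] lemma Z_apply_one_one : Z 1 1 = -1 := rfl
@[simp] lemma σm_apply_zero_zero : σm 0 0 = 0 := rfl
@[simp] lemma σm_apply_zero_one : σm 0 1 = 1 := rfl
@[simp] lemma σm_apply_one_zero : σm 1 0 = 0 := rfl
@[simp] lemma σm_apply_one_one : σm 1 1 = 0 := rfl

lemma Z_mul_self : Z * Z = 1 := by
  ext a b
  rcases zmod_two_cases a with rfl | rfl <;> rcases zmod_two_cases b with rfl | rfl <;>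
    simp [mul_apply, sum_zmod_two, one_apply]

lemma conjTranspose_Z : Zᴴ = Z := by
  ext a b
  rcases zmod_two_cases a with rfl | rfl <;> rcases zmod_two_cases b with rfl | rfl <;> simp

lemma conjTranspose_σm_mul_Z : σmᴴ * Z = σmᴴ := by
  ext a b
  rcases zmod_two_cases a with rfl | rfl <;> rcases zmod_two_cases b with rfl | rfl <;>
    simp [mul_apply, sum_zmod_two]

lemma Z_mul_σm : Z * σm = σm := by
  ext a b
  rcases zmod_two_cases a with rfl | rfl <;> rcases zmod_two_cases b with rfl | rfl <;>
    simp [mul_apply, sum_zmod_two]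

lemma σm_eq : σm = (1 / 2 : ℂ) • (X + Complex.I • Y) := by
  ext a b
  rcases zmod_two_cases a with rfl | rfl <;> rcases zmod_two_cases b with rfl | rfl <;> norm_num

lemma conjTranspose_σm_eq : σmᴴ = (1 / 2 : ℂ) • (X - Complex.I • Y) := by
  ext a b
  rcases zmod_two_cases a with rfl | rfl <;> rcases zmod_two_cases b with rfl | rfl <;> norm_num

lemma X_ne_one : X ≠ 1 := fun h => by simpa [one_apply] using congrFun₂ h 0 1

lemma Y_ne_one : Y ≠ 1 := fun h => by simpa [one_apply] using congrFun₂ h 0 1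

lemma Z_ne_one : Z ≠ 1 := fun h => by
  have := congrFun₂ h 1 1
  norm_num [one_apply] at this

lemma ne_one_of_mem_X_Y {A : Matrix (ZMod 2) (ZMod 2) ℂ} (hA : A ∈ ({X, Y} : Set _)) :
    A ≠ 1 := by
  rcases hA with rfl | rfl
  exacts [X_ne_one, Y_ne_one]

lemma two_qubit_hopping_apply (c : ℂ) (a b a' b' : ZMod 2) :
    c * (σmᴴ a b * σm a' b') + starRingEnd ℂ c * (σm a b * σmᴴ a' b') =
      1 / 2 * ((c.re : ℂ) * (X a b * X a' b' + Y a b * Y a' b') +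
        (c.im : ℂ) * (Y a b * X a' b' - X a b * Y a' b')) := by
  have hσ : ∀ a b, σm a b = (X a b + Complex.I * Y a b) / 2 := fun a b => by
    rw [σm_eq]; simp only [Matrix.smul_apply, Matrix.add_apply, smul_eq_mul]; ring
  have hσH : ∀ a b, σmᴴ a b = (X a b - Complex.I * Y a b) / 2 := fun a b => by
    rw [conjTranspose_σm_eq]; simp only [Matrix.smul_apply, Matrix.sub_apply, smul_eq_mul]; ring
  have hc : starRingEnd ℂ c = c.re - c.im * Complex.I := by apply Complex.ext <;> simp
  rw [hc, hσ, hσ, hσH, hσH]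
  nth_rw 1 [← Complex.re_add_im c]
  linear_combination
    (-(c.re : ℂ) * Y a b * Y a' b' + c.im * (X a b * Y a' b' - Y a b * X a' b')) / 2 * Complex.I_sq

section Tensor

variable {n : ℕ}

lemma tens_mul (M N : Fin n → Matrix (ZMod 2) (ZMod 2) ℂ) :
    tens M * tens N = tens fun k => M k * N k := by
  ext f g
  simp only [tens, mul_apply, of_apply, Finset.prod_univ_sum, Fintype.piFinset_univ,
    Finset.prod_mul_distrib]

lemma tens_conjTranspose (M : Fin n → Matrix (ZMod 2) (ZMod 2) ℂ) :
    (tens M)ᴴ = tens fun k => (M k)ᴴ := by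
  ext f g
  simp [tens, conjTranspose_apply, star_prod]

lemma tens_apply_eq_mul_mul_prod_sdiff (M : Fin n → Matrix (ZMod 2) (ZMod 2) ℂ)
    {i j : Fin n} (hij : i ≠ j) (f g : Fin n → ZMod 2) :
    tens M f g = M i (f i) (g i) * M j (f j) (g j) * ∏ k ∈ univ \ {i, j}, M k (f k) (g k) := by
  rw [tens, of_apply, ← prod_sdiff (subset_univ {i, j}), prod_pair hij, mul_comm]

end Tensor

section Hopping

variable {n : ℕ} {i j : Fin n}

lemma hopFam_of_ne {k : Fin n} (hi : k ≠ i) (hj : k ≠ j) (A B : Matrix (ZMod 2) (ZMod 2) ℂ) :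
    hopFam i j A B k = if i < k ∧ k < j then Z else 1 := by
  simp [hopFam, hi, hj]

lemma tens_hopFam_apply (hij : i ≠ j) (A B : Matrix (ZMod 2) (ZMod 2) ℂ)
    (f g : Fin n → ZMod 2) :
    tens (hopFam i j A B) f g = A (f i) (g i) * B (f j) (g j) *
      ∏ k ∈ univ \ {i, j}, (if i < k ∧ k < j then Z else 1) (f k) (g k) := by
  rw [tens_apply_eq_mul_mul_prod_sdiff _ hij]
  congr 1
  · simp [hopFam, hij.symm]
  · refine prod_congr rfl fun k hk => ?_
    simp only [mem_sdiff, mem_insert, mem_singleton, not_or] at hk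
    rw [hopFam_of_ne hk.2.1 hk.2.2]

lemma conjTranspose_ann_mul_ann_of_lt (hij : i < j) :
    (ann n i)ᴴ * ann n j = tens (hopFam i j σmᴴ σm) := by
  rw [ann, ann, tens_conjTranspose, tens_mul]
  congr 1
  funext k
  simp only [hopFam, Fin.lt_def, Fin.ext_iff] at hij ⊢
  split_ifs <;> first | omega | simp [conjTranspose_Z, Z_mul_self, conjTranspose_σm_mul_Z]

lemma conjTranspose_ann_mul_ann_of_gt (hij : i < j) :
    (ann n j)ᴴ * ann n i = tens (hopFam i j σm σmᴴ) := by
  rw [ann, ann, tens_conjTranspose, tens_mul]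
  congr 1
  funext k
  simp only [hopFam, Fin.lt_def, Fin.ext_iff] at hij ⊢
  split_ifs <;> first | omega | simp [conjTranspose_Z, Z_mul_self, Z_mul_σm]

lemma tens_single_mul_tens_single_mul_Zstr (hij : i ≠ j) (A B : Matrix (ZMod 2) (ZMod 2) ℂ) :
    tens (fun k => if k ∈ ({i} : Finset (Fin n)) then A else 1) *
      tens (fun k => if k ∈ ({j} : Finset (Fin n)) then B else 1) *
      Zstr (univ.filter fun k => i < k ∧ k < j) = tens (hopFam i j A B) := by
  rw [Zstr, tens_mul, tens_mul]
  congr 1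
  funext k
  simp only [hopFam, mem_singleton, mem_filter, mem_univ, true_and]
  split_ifs <;> simp_all

lemma card_filter_hopFam_ne_one (hij : i ≤ j) {A B : Matrix (ZMod 2) (ZMod 2) ℂ}
    (hA : A ≠ 1) (hB : B ≠ 1) :
    (univ.filter fun k => hopFam i j A B k ≠ 1).card = (j : ℕ) - (i : ℕ) + 1 := by
  have hsupp : (univ.filter fun k => hopFam i j A B k ≠ 1) = Icc i j := by
    ext k
    simp only [mem_filter, mem_univ, true_and, mem_Icc]
    simp only [hopFam, Fin.le_def, Fin.lt_def, Fin.ext_iff] at hij ⊢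
    split_ifs <;> simp [*, Z_ne_one] <;> omega
  rw [hsupp, Fin.card_Icc]
  omega

lemma hopping_term_eq_tens_hopFam (hij : i < j) (c : ℂ) :
    c • ((ann n i)ᴴ * ann n j) + starRingEnd ℂ c • ((ann n j)ᴴ * ann n i) =
      (1 / 2 : ℂ) • ((c.re : ℂ) • (tens (hopFam i j X X) + tens (hopFam i j Y Y)) +
        (c.im : ℂ) • (tens (hopFam i j Y X) - tens (hopFam i j X Y))) := by
  rw [conjTranspose_ann_mul_ann_of_lt hij, conjTranspose_ann_mul_ann_of_gt hij]
  ext f g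
  simp only [Matrix.add_apply, Matrix.smul_apply, Matrix.sub_apply, smul_eq_mul,
    tens_hopFam_apply hij.ne]
  generalize (∏ k ∈ univ \ {i, j}, (if i < k ∧ k < j then Z else 1) (f k) (g k)) = P
  linear_combination P * two_qubit_hopping_apply c (f i) (g i) (f j) (g j)

end Hopping


theorem jordan_wigner_hopping_term_general (n : ℕ) (i j : Fin n) (hij : i < j) (c : ℂ) :
    c • ((ann n i)ᴴ * ann n j) + (starRingEnd ℂ c) • ((ann n j)ᴴ * ann n i) =
      (1 / 2 : ℂ) •
        (((c.re : ℂ) • (Xstr {i} * Xstr {j} + Ystr {i} * Ystr {j}) +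
          (c.im : ℂ) • (Ystr {i} * Xstr {j} - Xstr {i} * Ystr {j})) *
          Zstr (Finset.univ.filter fun k => i < k ∧ k < j)) ∧
    Xstr {i} * Xstr {j} * Zstr (Finset.univ.filter fun k => i < k ∧ k < j) =
      tens (hopFam i j X X) ∧
    Ystr {i} * Ystr {j} * Zstr (Finset.univ.filter fun k => i < k ∧ k < j) =
      tens (hopFam i j Y Y) ∧
    Ystr {i} * Xstr {j} * Zstr (Finset.univ.filter fun k => i < k ∧ k < j) =
      tens (hopFam i j Y X) ∧
    Xstr {i} * Ystr {j} * Zstr (Finset.univ.filter fun k => i < k ∧ k < j) =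
      tens (hopFam i j X Y) ∧
    (∀ A ∈ ({X, Y} : Set (Matrix (ZMod 2) (ZMod 2) ℂ)),
      ∀ B ∈ ({X, Y} : Set (Matrix (ZMod 2) (ZMod 2) ℂ)),
      (Finset.univ.filter fun k => hopFam i j A B k ≠ 1).card = (j : ℕ) - (i : ℕ) + 1) := by
  simp only [add_mul, sub_mul, smul_mul_assoc, Xstr, Ystr,
    tens_single_mul_tens_single_mul_Zstr hij.ne, true_and]
  refine ⟨hopping_term_eq_tens_hopFam hij c, fun A hA B hB => ?_⟩
  exact card_filter_hopFam_ne_one hij.le (ne_one_of_mem_X_Y hA) (ne_one_of_mem_X_Y hB)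

/-- the Jordan–Wigner image of the hopping term `c a_i† a_j + c̄ a_j† a_i` is
`½ [Re(c)(X_i X_j + Y_i Y_j) + Im(c)(Y_i X_j − X_i Y_j)] Z_{[i+1,j−1]}`, and each of the four
Pauli strings `X_i X_j Z_{[i+1,j−1]}`, `Y_i Y_j Z_{[i+1,j−1]}`, `Y_i X_j Z_{[i+1,j−1]}`,
`X_i Y_j Z_{[i+1,j−1]}` acts nontrivially on exactly `j − i + 1` tensor factors. -/
theorem jordan_wigner_hopping_term (n : ℕ) (hn : 1 ≤ n) (i j : Fin n) (hij : i < j) (c : ℂ) :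
    c • ((ann n i)ᴴ * ann n j) + (starRingEnd ℂ c) • ((ann n j)ᴴ * ann n i) =
      (1 / 2 : ℂ) •
        (((c.re : ℂ) • (Xstr {i} * Xstr {j} + Ystr {i} * Ystr {j}) +
          (c.im : ℂ) • (Ystr {i} * Xstr {j} - Xstr {i} * Ystr {j})) *
          Zstr (Finset.univ.filter fun k => i < k ∧ k < j)) ∧
    Xstr {i} * Xstr {j} * Zstr (Finset.univ.filter fun k => i < k ∧ k < j) =
      tens (hopFam i j X X) ∧
    Ystr {i} * Ystr {j} * Zstr (Finset.univ.filter fun k => i < k ∧ k < j) =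
      tens (hopFam i j Y Y) ∧
    Ystr {i} * Xstr {j} * Zstr (Finset.univ.filter fun k => i < k ∧ k < j) =
      tens (hopFam i j Y X) ∧
    Xstr {i} * Ystr {j} * Zstr (Finset.univ.filter fun k => i < k ∧ k < j) =
      tens (hopFam i j X Y) ∧
    (∀ A ∈ ({X, Y} : Set (Matrix (ZMod 2) (ZMod 2) ℂ)),
      ∀ B ∈ ({X, Y} : Set (Matrix (ZMod 2) (ZMod 2) ℂ)),
      (Finset.univ.filter fun k => hopFam i j A B k ≠ 1).card = (j : ℕ) - (i : ℕ) + 1) :=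
  jordan_wigner_hopping_term_general n i j hij c

end FQ
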